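/- arXiv:1706.01089 — 4 statements merged into one kernel-verified Lean document; each statement's English description precedes it below -/
import Mathlib

section
/- Let Λ and Λ′ be Delone sets in ℝ. Then Λ and Λ′ are bounded distance equivalent as point sets if and only if their Dirac combs ω = ∑_{x∈Λ} δ_x and ω′ = ∑_{x∈Λ′} δ_x are bounded distance equivalent as measures. -/
/-!
If `φ` moves points by at most `C`, it maps `Λ ∩ [a, b]` injectively into `Λ' ∩ [a - C, b + C]`,
and by uniform discreteness the two extra intervals of length `C` hold boundedly many points of
`Λ'`; applying this also to `φ⁻¹` bounds the difference of the counts.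

Conversely, a Delone set in `ℝ` is the range of a strictly increasing `e : ℤ → ℝ` with gaps at
most `3R`. The index `N t = max {n | e n ≤ t}`, i.e. the upper adjoint of `e`, satisfies
`#(Λ ∩ (s, t]) = N t - N s`, so bounded discrepancy of the counts says that `N - N'` stays
within bounded distance of `k = N 0 - N' 0`. Then `e n ↦ e' (n - k)` pairs points whose indices
under `N'` differ boundedly, and bounded gaps turn this into bounded displacement.
-/

open MeasureTheory

/-- A set `Λ ⊆ ℝ` is Delone: uniformly discrete and relatively dense. -/
def IsDelone (Λ : Set ℝ) : Prop :=
  (∃ r > 0, ∀ x ∈ Λ, ∀ y ∈ Λ, x ≠ y → r ≤ |x - y|) ∧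
  (∃ R > 0, ∀ c : ℝ, ∃ x ∈ Λ, x ∈ Set.Icc (c - R) (c + R))

/-- Bounded distance equivalence of point sets in `ℝ`: a bijection moving every
point by a uniformly bounded amount. -/
def BddDistSets (Λ Λ' : Set ℝ) : Prop :=
  ∃ φ : ℝ → ℝ, Set.BijOn φ Λ Λ' ∧ ∃ C > 0, ∀ x ∈ Λ, |x - φ x| ≤ C

/-- The Dirac comb of a point set `Λ ⊆ ℝ`: the measure `∑_{x ∈ Λ} δ_x`. -/
noncomputable def diracComb (Λ : Set ℝ) : Measure ℝ :=
  Measure.sum (fun x : Λ => Measure.dirac (x : ℝ))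

/-- Bounded distance equivalence of measures on `ℝ`. -/
def BddDistMeasures (μ ν : Measure ℝ) : Prop :=
  ∃ C > 0, ∀ a b : ℝ, a < b →
    |(μ (Set.Icc a b)).toReal - (ν (Set.Icc a b)).toReal| < C

open Set

section Separated

variable {Λ : Set ℝ} {r : ℝ}

lemma injOn_floor_div_of_separated (hr : 0 < r)
    (hsep : ∀ x ∈ Λ, ∀ y ∈ Λ, x ≠ y → r ≤ |x - y|) (a : ℝ) :
    InjOn (fun x => ⌊(x - a) / r⌋) Λ := by
  intro x hx y hy hxy
  by_contra hne
  have h := Int.abs_sub_lt_one_of_floor_eq_floor hxy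
  rw [← sub_div, sub_sub_sub_cancel_right, abs_div, abs_of_pos hr, div_lt_one hr] at h
  exact (hsep x hx y hy hne).not_gt h

lemma mapsTo_floor_div_Icc (hr : 0 < r) (a b : ℝ) :
    MapsTo (fun x => ⌊(x - a) / r⌋) (Λ ∩ Icc a b) (Icc 0 ⌊(b - a) / r⌋) := by
  rintro x ⟨-, hax, hxb⟩
  exact ⟨Int.floor_nonneg.2 (div_nonneg (sub_nonneg.2 hax) hr.le),
    Int.floor_le_floor (div_le_div_of_nonneg_right (sub_le_sub_right hxb a) hr.le)⟩

lemma finite_inter_Icc_of_separated (hr : 0 < r)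
    (hsep : ∀ x ∈ Λ, ∀ y ∈ Λ, x ≠ y → r ≤ |x - y|) (a b : ℝ) :
    (Λ ∩ Icc a b).Finite :=
  (finite_Icc _ _).of_injOn (mapsTo_floor_div_Icc hr a b)
    ((injOn_floor_div_of_separated hr hsep a).mono inter_subset_left)

lemma ncard_inter_Icc_le_of_separated (hr : 0 < r)
    (hsep : ∀ x ∈ Λ, ∀ y ∈ Λ, x ≠ y → r ≤ |x - y|) {a b : ℝ} (hab : a ≤ b) :
    ((Λ ∩ Icc a b).ncard : ℝ) ≤ (b - a) / r + 1 := by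
  have hle := ncard_le_ncard_of_injOn _ (mapsTo_floor_div_Icc hr a b)
    ((injOn_floor_div_of_separated hr hsep a).mono inter_subset_left) (finite_Icc _ _)
  have hfloor : 0 ≤ ⌊(b - a) / r⌋ := Int.floor_nonneg.2 (div_nonneg (sub_nonneg.2 hab) hr.le)
  rw [← Finset.coe_Icc (0 : ℤ), ncard_coe_finset, Int.card_Icc, sub_zero] at hle
  calc ((Λ ∩ Icc a b).ncard : ℝ) ≤ ((⌊(b - a) / r⌋ + 1).toNat : ℤ) := by exact_mod_cast hle
    _ = ⌊(b - a) / r⌋ + 1 := by rw [Int.toNat_of_nonneg (by omega)]; push_cast; rfl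
    _ ≤ (b - a) / r + 1 := by gcongr; exact Int.floor_le _

lemma ncard_inter_Icc_sub_add_le_of_separated (hr : 0 < r)
    (hsep : ∀ x ∈ Λ, ∀ y ∈ Λ, x ≠ y → r ≤ |x - y|) {a b c : ℝ} (hc : 0 ≤ c) :
    ((Λ ∩ Icc (a - c) (b + c)).ncard : ℝ) ≤ (Λ ∩ Icc a b).ncard + 2 * (c / r + 1) := by
  have hfin := finite_inter_Icc_of_separated hr hsep
  have hsplit : Λ ∩ Icc (a - c) (b + c) ⊆
      (Λ ∩ Icc (a - c) a ∪ Λ ∩ Icc a b) ∪ Λ ∩ Icc b (b + c) := by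
    rintro x ⟨hx, hx₁, hx₂⟩
    rcases le_total x a with hxa | hax
    · exact .inl (.inl ⟨hx, hx₁, hxa⟩)
    rcases le_total x b with hxb | hbx
    · exact .inl (.inr ⟨hx, hax, hxb⟩)
    · exact .inr ⟨hx, hbx, hx₂⟩
  have hcount : (Λ ∩ Icc (a - c) (b + c)).ncard ≤
      (Λ ∩ Icc (a - c) a).ncard + (Λ ∩ Icc a b).ncard + (Λ ∩ Icc b (b + c)).ncard :=
    (ncard_le_ncard hsplit (((hfin _ _).union (hfin _ _)).union (hfin _ _))).trans
      ((ncard_union_le _ _).trans (Nat.add_le_add_right (ncard_union_le _ _) _))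
  have hleft := ncard_inter_Icc_le_of_separated hr hsep (sub_le_self a hc)
  have hright := ncard_inter_Icc_le_of_separated hr hsep (le_add_of_nonneg_right hc (a := b))
  rw [sub_sub_cancel] at hleft
  rw [add_sub_cancel_left] at hright
  have : ((Λ ∩ Icc (a - c) (b + c)).ncard : ℝ) ≤
      (Λ ∩ Icc (a - c) a).ncard + (Λ ∩ Icc a b).ncard + (Λ ∩ Icc b (b + c)).ncard := by
    exact_mod_cast hcount
  linarith

end Separated

lemma BddDistSets.symm {Λ Λ' : Set ℝ} : BddDistSets Λ Λ' → BddDistSets Λ' Λ := by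
  rintro ⟨φ, hφ, C, hC, hmove⟩
  have hinv := hφ.invOn_invFunOn
  have hψ : BijOn (Function.invFunOn φ Λ) Λ' Λ := hφ.symm hinv.symm
  refine ⟨_, hψ, C, hC, fun y hy => ?_⟩
  rw [abs_sub_comm]
  simpa only [hinv.2 hy] using hmove _ (hψ.mapsTo hy)

lemma BddDistSets.ncard_inter_Icc_le {Λ Λ' : Set ℝ} {r' : ℝ} (h : BddDistSets Λ Λ') (hr' : 0 < r')
    (hsep' : ∀ x ∈ Λ', ∀ y ∈ Λ', x ≠ y → r' ≤ |x - y|) :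
    ∃ K, ∀ a b, ((Λ ∩ Icc a b).ncard : ℝ) ≤ (Λ' ∩ Icc a b).ncard + K := by
  obtain ⟨φ, hφ, C, hC, hmove⟩ := h
  refine ⟨2 * (C / r' + 1), fun a b => ?_⟩
  have hmaps : MapsTo φ (Λ ∩ Icc a b) (Λ' ∩ Icc (a - C) (b + C)) := by
    rintro x ⟨hx, hax, hxb⟩
    have := abs_le.1 (hmove x hx)
    exact ⟨hφ.mapsTo hx, by linarith, by linarith⟩
  have hle := ncard_le_ncard_of_injOn φ hmaps (hφ.injOn.mono inter_subset_left)
    (finite_inter_Icc_of_separated hr' hsep' _ _)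
  calc ((Λ ∩ Icc a b).ncard : ℝ) ≤ (Λ' ∩ Icc (a - C) (b + C)).ncard := by exact_mod_cast hle
    _ ≤ (Λ' ∩ Icc a b).ncard + 2 * (C / r' + 1) :=
      ncard_inter_Icc_sub_add_le_of_separated hr' hsep' hC.le

lemma toReal_diracComb_apply (Λ : Set ℝ) {s : Set ℝ} (hs : MeasurableSet s) :
    (diracComb Λ s).toReal = (Λ ∩ s).ncard := by
  have : diracComb Λ s = (Λ ∩ s).encard := by
    rw [diracComb, Measure.sum_apply _ hs, ← ENNReal.tsum_set_one,
      tsum_subtype (Λ ∩ s) (fun _ => 1), ← indicator_indicator, ← tsum_subtype]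
    simp only [Measure.dirac_apply' _ hs]
    rfl
  rw [this, ncard_def]
  cases (Λ ∩ s).encard using ENat.recTopCoe <;> simp

lemma bddDistMeasures_diracComb_iff (Λ Λ' : Set ℝ) :
    BddDistMeasures (diracComb Λ) (diracComb Λ') ↔ ∃ C > 0, ∀ a b : ℝ, a < b →
      |((Λ ∩ Icc a b).ncard : ℝ) - (Λ' ∩ Icc a b).ncard| < C := by
  simp only [BddDistMeasures, toReal_diracComb_apply _ measurableSet_Icc]

lemma abs_ncard_inter_Ioc_sub_le (Λ Λ' : Set ℝ) (a b : ℝ) :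
    |((Λ ∩ Ioc a b).ncard : ℝ) - (Λ' ∩ Ioc a b).ncard| ≤
      |((Λ ∩ Icc a b).ncard : ℝ) - (Λ' ∩ Icc a b).ncard| + 1 := by
  have hIoc : ∀ Λ₀ : Set ℝ, Λ₀ ∩ Ioc a b = (Λ₀ ∩ Icc a b) \ {a} := fun Λ₀ => by
    rw [inter_sdiff_assoc, Icc_sdiff_left]
  have hle : ∀ Λ₀ : Set ℝ, ((Λ₀ ∩ Ioc a b).ncard : ℝ) ≤ (Λ₀ ∩ Icc a b).ncard := fun Λ₀ => by
    rw [hIoc]; exact_mod_cast ncard_sdiff_singleton_le _ _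
  have hge : ∀ Λ₀ : Set ℝ, ((Λ₀ ∩ Icc a b).ncard : ℝ) ≤ (Λ₀ ∩ Ioc a b).ncard + 1 := fun Λ₀ => by
    rw [hIoc]
    have := pred_ncard_le_ncard_sdiff_singleton (Λ₀ ∩ Icc a b) a
    exact_mod_cast (by omega : (Λ₀ ∩ Icc a b).ncard ≤ ((Λ₀ ∩ Icc a b) \ {a}).ncard + 1)
  rw [abs_sub_le_iff]
  constructor <;> linarith [le_abs_self (((Λ ∩ Icc a b).ncard : ℝ) - (Λ' ∩ Icc a b).ncard),
    neg_abs_le (((Λ ∩ Icc a b).ncard : ℝ) - (Λ' ∩ Icc a b).ncard), hle Λ, hle Λ', hge Λ, hge Λ']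

section Enumeration

variable {e : ℤ → ℝ} {N : ℝ → ℤ} {G : ℝ}

lemma GaloisConnection.u_l_eq_of_strictMono {β : Type*} [LinearOrder β] {l : ℤ → β} {u : β → ℤ}
    (gc : GaloisConnection l u) (hl : StrictMono l) (n : ℤ) : u (l n) = n :=
  le_antisymm (Int.lt_add_one_iff.1 (gc.lt_iff_lt.1 (hl (lt_add_one n)))) (gc.le_u_l n)

lemma range_inter_Ioc_eq_image (gc : GaloisConnection e N) (s t : ℝ) :
    range e ∩ Ioc s t = e '' Ioc (N s) (N t) := by
  ext x
  constructor
  · rintro ⟨⟨n, rfl⟩, hs, ht⟩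
    exact ⟨n, ⟨gc.lt_iff_lt.1 hs, gc.le_iff_le.1 ht⟩, rfl⟩
  · rintro ⟨n, ⟨hs, ht⟩, rfl⟩
    exact ⟨mem_range_self n, gc.lt_iff_lt.2 hs, gc.le_iff_le.2 ht⟩

lemma ncard_range_inter_Ioc (gc : GaloisConnection e N) (he : Function.Injective e) {s t : ℝ}
    (hst : s ≤ t) : ((range e ∩ Ioc s t).ncard : ℤ) = N t - N s := by
  rw [range_inter_Ioc_eq_image gc, ncard_image_of_injective _ he, ← Finset.coe_Ioc,
    ncard_coe_finset, Int.card_Ioc, Int.toNat_of_nonneg (sub_nonneg.2 (gc.monotone_u hst))]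

lemma le_add_mul_of_succ_le (hG : ∀ n, e (n + 1) ≤ e n + G) {m n : ℤ} (hmn : m ≤ n) :
    e n ≤ e m + (n - m) * G := by
  induction n, hmn using Int.leInduction with
  | base => simp
  | succ n _ ih => push_cast; linarith [hG n]

lemma sub_le_mul_of_succ_le (gc : GaloisConnection e N) (hG : ∀ n, e (n + 1) ≤ e n + G)
    {s t : ℝ} (hst : s ≤ t) : t - s ≤ (N t - N s + 1 : ℤ) * G := by
  have hlt : t < e (N t + 1) := gc.lt_iff_lt.2 (lt_add_one _)
  have hle : e (N s) ≤ s := gc.l_u_le s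
  have hstep := le_add_mul_of_succ_le hG ((gc.monotone_u hst).trans (Int.le_add_one le_rfl))
  push_cast at hstep ⊢
  linarith

lemma exists_galoisConnection (he : Monotone e) (hup : ∀ t, ∃ n, t < e n)
    (hdown : ∀ t, ∃ n, e n ≤ t) : ∃ N : ℝ → ℤ, GaloisConnection e N := by
  have hmax : ∀ t : ℝ, ∃ n, e n ≤ t ∧ ∀ m, e m ≤ t → m ≤ n := fun t => by
    obtain ⟨b, hb⟩ := hup t
    exact Int.exists_greatest_of_bdd
      ⟨b, fun m hm => (he.reflect_lt (hm.trans_lt hb)).le⟩ (hdown t)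
  choose N hN hNmax using hmax
  exact ⟨N, fun n t => ⟨hNmax t n, fun hn => (he hn).trans (hN t)⟩⟩

end Enumeration

lemma exists_strictMono_range_eq {Λ : Set ℝ} (hfin : ∀ a b, (Λ ∩ Icc a b).Finite)
    (hup : ∀ t, ∃ x ∈ Λ, t < x) (hdown : ∀ t, ∃ x ∈ Λ, x < t) :
    ∃ e : ℤ → ℝ, StrictMono e ∧ range e = Λ := by
  let : LocallyFiniteOrder Λ := LocallyFiniteOrder.ofFiniteIcc fun a b =>
    (hfin a b).preimage Subtype.val_injective.injOn |>.subset fun x hx => ⟨x.2, hx⟩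
  let := LinearLocallyFiniteOrder.succOrder Λ
  let := LinearLocallyFiniteOrder.predOrder Λ
  have : NoMaxOrder Λ := ⟨fun x => by obtain ⟨y, hy, hxy⟩ := hup x; exact ⟨⟨y, hy⟩, hxy⟩⟩
  have : NoMinOrder Λ := ⟨fun x => by obtain ⟨y, hy, hxy⟩ := hdown x; exact ⟨⟨y, hy⟩, hxy⟩⟩
  have : Nonempty Λ := let ⟨x, hx, _⟩ := hup 0; ⟨⟨x, hx⟩⟩
  let f := (orderIsoIntOfLinearSuccPredArch (ι := Λ)).symm
  refine ⟨fun n => f n, Subtype.strictMono_coe _ |>.comp f.strictMono, ?_⟩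
  rw [range_comp' Subtype.val f, f.range_eq, image_univ, Subtype.range_coe]

lemma IsDelone.exists_int_enum {Λ : Set ℝ} (hΛ : IsDelone Λ) :
    ∃ (e : ℤ → ℝ) (N : ℝ → ℤ) (G : ℝ), StrictMono e ∧ range e = Λ ∧
      GaloisConnection e N ∧ ∀ n, e (n + 1) ≤ e n + G := by
  obtain ⟨⟨r, hr, hsep⟩, R, hR, hdense⟩ := hΛ
  have hup : ∀ t, ∃ x ∈ Λ, t + R ≤ x ∧ x ≤ t + 3 * R := fun t => by
    obtain ⟨x, hx, hx₁, hx₂⟩ := hdense (t + 2 * R)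
    exact ⟨x, hx, by linarith, by linarith⟩
  have hdown : ∀ t, ∃ x ∈ Λ, x < t := fun t => by
    obtain ⟨x, hx, -, hx₂⟩ := hdense (t - 2 * R)
    exact ⟨x, hx, by linarith⟩
  obtain ⟨e, he, rfl⟩ := exists_strictMono_range_eq (finite_inter_Icc_of_separated hr hsep)
    (fun t => let ⟨x, hx, hx₁, _⟩ := hup t; ⟨x, hx, by linarith⟩) hdown
  obtain ⟨N, gc⟩ := exists_galoisConnection he.monotone
    (fun t => let ⟨_, ⟨n, rfl⟩, ht, _⟩ := hup t; ⟨n, by linarith⟩)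
    (fun t => let ⟨_, ⟨n, rfl⟩, ht⟩ := hdown t; ⟨n, ht.le⟩)
  refine ⟨e, N, 3 * R, he, rfl, gc, fun n => ?_⟩
  obtain ⟨_, ⟨m, rfl⟩, hm₁, hm₂⟩ := hup (e n)
  have hnm : n < m := he.lt_iff_lt.1 (by linarith)
  exact (he.monotone hnm).trans hm₂

section Matching

variable {e e' : ℤ → ℝ} {N N' : ℝ → ℤ} {G G' K : ℝ}

lemma abs_index_sub_index_sub_le {s t : ℝ}
    (he : Function.Injective e) (he' : Function.Injective e') (gc : GaloisConnection e N)
    (gc' : GaloisConnection e' N') (hst : s ≤ t)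
    (hK : |((range e ∩ Ioc s t).ncard : ℝ) - (range e' ∩ Ioc s t).ncard| ≤ K) :
    |((N t - N' t : ℤ) : ℝ) - (N s - N' s : ℤ)| ≤ K := by
  rw [← Int.cast_natCast, ← Int.cast_natCast (R := ℝ) (range e' ∩ _).ncard,
    ncard_range_inter_Ioc gc he hst, ncard_range_inter_Ioc gc' he' hst] at hK
  convert hK using 2
  push_cast
  ring

lemma bijOn_range_index_sub (he : StrictMono e) (he' : StrictMono e')
    (gc : GaloisConnection e N) (k : ℤ) :
    BijOn (fun x => e' (N x - k)) (range e) (range e') := by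
  have hN := gc.u_l_eq_of_strictMono he
  refine ⟨?_, ?_, ?_⟩
  · rintro _ ⟨n, rfl⟩
    exact mem_range_self _
  · rintro _ ⟨n, rfl⟩ _ ⟨m, rfl⟩ h
    have := he'.injective h
    simp only [hN, sub_left_inj] at this
    rw [this]
  · rintro _ ⟨m, rfl⟩
    exact ⟨e (m + k), mem_range_self _, by simp [hN]⟩

lemma abs_sub_le_of_abs_index_sub_le (he : StrictMono e) (he' : StrictMono e')
    (gc : GaloisConnection e N) (gc' : GaloisConnection e' N') (hG : ∀ n, e (n + 1) ≤ e n + G)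
    (hG' : ∀ n, e' (n + 1) ≤ e' n + G') {k : ℤ} (hD : ∀ t, |((N t - N' t : ℤ) : ℝ) - k| ≤ K)
    (n : ℤ) : |e n - e' (n - k)| ≤ (K + 1) * (G + G') := by
  have hN := gc.u_l_eq_of_strictMono he
  have hN' := gc'.u_l_eq_of_strictMono he'
  have hK : 0 ≤ K + 1 := by linarith [(abs_nonneg _).trans (hD 0)]
  have hG₀ : 0 ≤ G := by linarith [he (lt_add_one 0), hG 0]
  have hG'₀ : 0 ≤ G' := by linarith [he' (lt_add_one 0), hG' 0]
  have hKG := mul_nonneg hK hG₀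
  have hKG' := mul_nonneg hK hG'₀
  rw [abs_sub_le_iff]
  rcases le_total (e n) (e' (n - k)) with hle | hle
  · have h := sub_le_mul_of_succ_le gc' hG' hle
    have hDx := (abs_le.1 (hD (e n))).2
    rw [hN'] at h
    rw [hN] at hDx
    push_cast at h hDx
    have : ((n : ℝ) - k - N' (e n) + 1) * G' ≤ (K + 1) * G' :=
      mul_le_mul_of_nonneg_right (by linarith) hG'₀
    constructor <;> linarith
  · have h := sub_le_mul_of_succ_le gc hG hle
    have hDy := (abs_le.1 (hD (e' (n - k)))).1
    rw [hN] at h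
    rw [hN'] at hDy
    push_cast at h hDy
    have : ((n : ℝ) - N (e' (n - k)) + 1) * G ≤ (K + 1) * G :=
      mul_le_mul_of_nonneg_right (by linarith) hG₀
    constructor <;> linarith

theorem bddDistSets_range_of_abs_ncard_sub_le (he : StrictMono e) (he' : StrictMono e')
    (gc : GaloisConnection e N) (gc' : GaloisConnection e' N') (hG : ∀ n, e (n + 1) ≤ e n + G)
    (hG' : ∀ n, e' (n + 1) ≤ e' n + G')
    (hK : ∀ s t, s < t → |((range e ∩ Ioc s t).ncard : ℝ) - (range e' ∩ Ioc s t).ncard| ≤ K) :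
    BddDistSets (range e) (range e') := by
  have hK₀ : 0 ≤ K := (abs_nonneg _).trans (hK 0 1 one_pos)
  have hD : ∀ t, |((N t - N' t : ℤ) : ℝ) - (N 0 - N' 0 : ℤ)| ≤ K := by
    intro t
    rcases lt_trichotomy 0 t with ht | rfl | ht
    · exact abs_index_sub_index_sub_le he.injective he'.injective gc gc' ht.le (hK 0 t ht)
    · simpa using hK₀
    · rw [abs_sub_comm]
      exact abs_index_sub_index_sub_le he.injective he'.injective gc gc' ht.le (hK t 0 ht)
  have hG₀ : 0 < G := by linarith [he (lt_add_one 0), hG 0]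
  have hG'₀ : 0 < G' := by linarith [he' (lt_add_one 0), hG' 0]
  refine ⟨_, bijOn_range_index_sub he he' gc (N 0 - N' 0), (K + 1) * (G + G'), by positivity, ?_⟩
  rintro _ ⟨n, rfl⟩
  simpa only [gc.u_l_eq_of_strictMono he] using
    abs_sub_le_of_abs_index_sub_le he he' gc gc' hG hG' hD n

end Matching

/-- Two Delone sets in `ℝ` are bounded distance equivalent as point sets if and only
if their Dirac combs are bounded distance equivalent as measures. -/
theorem delone_bddDist_iff_diracComb_bddDist (Λ Λ' : Set ℝ)
    (hΛ : IsDelone Λ) (hΛ' : IsDelone Λ') :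
    BddDistSets Λ Λ' ↔ BddDistMeasures (diracComb Λ) (diracComb Λ') := by
  rw [bddDistMeasures_diracComb_iff]
  constructor
  · intro h
    obtain ⟨r, hr, hsep⟩ := hΛ.1
    obtain ⟨r', hr', hsep'⟩ := hΛ'.1
    obtain ⟨K, hK⟩ := h.ncard_inter_Icc_le hr' hsep'
    obtain ⟨K', hK'⟩ := h.symm.ncard_inter_Icc_le hr hsep
    refine ⟨|K| + |K'| + 1, by positivity, fun a b _ => ?_⟩
    rw [abs_sub_lt_iff]
    constructor <;> linarith [hK a b, hK' a b, le_abs_self K, le_abs_self K', abs_nonneg K,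
      abs_nonneg K']
  · rintro ⟨C, -, hC⟩
    obtain ⟨e, N, G, he, rfl, gc, hG⟩ := hΛ.exists_int_enum
    obtain ⟨e', N', G', he', rfl, gc', hG'⟩ := hΛ'.exists_int_enum
    refine bddDistSets_range_of_abs_ncard_sub_le (K := C + 1) he he' gc gc' hG hG' fun s t hst => ?_
    exact (abs_ncard_inter_Ioc_sub_le _ _ s t).trans (add_le_add_left (hC s t hst).le 1)
end

section
/- Let α > 0 be irrational with continued fraction expansion α = [a₀; a₁, a₂, …] whose partial quotients are uniformly bounded, i.e. there is c > 0 with a_i ≤ c for all i ≥ 1. Then α satisfies condition (*): there is a constant C > 0 such that ∑_{ℓ=0}^m a_{ℓ+1} q_ℓ^{−1/2} ∑_{k=1}^{ℓ+1} a_k < C for all m ∈ ℕ, where q₀ = 1, q₁ = a₁, q_{ℓ+1} = a_{ℓ+1} q_ℓ + q_{ℓ−1} are the convergent denominators of α. -/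
/-- The Gauss map `x ↦ 1/{x}`. -/
noncomputable def gaussMap (x : ℝ) : ℝ := (Int.fract x)⁻¹

/-- The partial quotients `a_n` of the continued fraction expansion of `α`. -/
noncomputable def cfA (α : ℝ) (n : ℕ) : ℤ := ⌊gaussMap^[n] α⌋

/-- The convergent denominators `q_n` of the continued fraction expansion of `α`:
`q₀ = 1`, `q₁ = a₁`, `q_{n+2} = a_{n+2} q_{n+1} + q_n`. -/
noncomputable def cfQ (α : ℝ) : ℕ → ℝ
  | 0 => 1
  | 1 => (cfA α 1 : ℝ)
  | (n + 2) => (cfA α (n + 2) : ℝ) * cfQ α (n + 1) + cfQ α n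

/-!
The partial quotients of an irrational number are at least `1`, so its convergent denominators
satisfy `q_{n+2} ≥ q_{n+1} + q_n ≥ 2 q_n` and grow at least like `√2 ^ n`. Hence `q_ℓ^{-1/2}`
decays geometrically, and with `a_i ≤ c` the `ℓ`-th term of the sum is at most
`c² (ℓ + 1) q_ℓ^{-1/2}`, the general term of a convergent series.
-/

open Finset

theorem Irrational.iterate_gaussMap {x : ℝ} (hx : Irrational x) (n : ℕ) :
    Irrational (gaussMap^[n] x) := by
  induction n with
  | zero => exact hx
  | succ n ih => rw [Function.iterate_succ_apply']; exact (ih.sub_intCast _).inv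

theorem Irrational.one_lt_gaussMap {x : ℝ} (hx : Irrational x) : 1 < gaussMap x :=
  (one_lt_inv₀ (Int.fract_pos.2 (hx.ne_int _))).2 (Int.fract_lt_one x)

section ContinuedFraction

variable {α : ℝ}

theorem one_le_cfA (hα : Irrational α) {n : ℕ} (hn : n ≠ 0) : (1 : ℝ) ≤ cfA α n := by
  obtain ⟨m, rfl⟩ := Nat.exists_eq_succ_of_ne_zero hn
  have h : (1 : ℤ) ≤ cfA α (m + 1) := by
    rw [cfA, Function.iterate_succ_apply', Int.le_floor, Int.cast_one]
    exact (hα.iterate_gaussMap m).one_lt_gaussMap.le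
  exact_mod_cast h

theorem cfQ_add_two (α : ℝ) (n : ℕ) :
    cfQ α (n + 2) = (cfA α (n + 2) : ℝ) * cfQ α (n + 1) + cfQ α n := rfl

theorem one_le_cfQ (hα : Irrational α) (n : ℕ) : 1 ≤ cfQ α n := by
  induction n using Nat.twoStepInduction with
  | zero => simp [cfQ]
  | one => simpa [cfQ] using one_le_cfA hα one_ne_zero
  | more n ih₀ ih₁ =>
    have ha := one_le_cfA hα (n + 1).succ_ne_zero
    rw [cfQ_add_two]
    nlinarith

theorem cfQ_succ_add_cfQ_le (hα : Irrational α) (n : ℕ) :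
    cfQ α (n + 1) + cfQ α n ≤ cfQ α (n + 2) := by
  have ha := one_le_cfA hα (n + 1).succ_ne_zero
  have hq := one_le_cfQ hα (n + 1)
  rw [cfQ_add_two]
  nlinarith

theorem cfQ_le_cfQ_succ (hα : Irrational α) : ∀ n, cfQ α n ≤ cfQ α (n + 1)
  | 0 => by simpa [cfQ] using one_le_cfA hα one_ne_zero
  | n + 1 => by linarith [cfQ_succ_add_cfQ_le hα n, one_le_cfQ hα n]

theorem two_mul_cfQ_le_cfQ_add_two (hα : Irrational α) (n : ℕ) :
    2 * cfQ α n ≤ cfQ α (n + 2) := by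
  linarith [cfQ_succ_add_cfQ_le hα n, cfQ_le_cfQ_succ hα n]

theorem cfA_div_sqrt_cfQ_mul_sum_le (hα : Irrational α) {c : ℝ}
    (hbd : ∀ i : ℕ, 1 ≤ i → (cfA α i : ℝ) ≤ c) (ℓ : ℕ) :
    ((cfA α (ℓ + 1) : ℝ) / √(cfQ α ℓ)) * ∑ k ∈ Icc 1 (ℓ + 1), (cfA α k : ℝ) ≤
      c ^ 2 * (((ℓ : ℝ) + 1) / √(cfQ α ℓ)) := by
  have hc : 0 ≤ c := zero_le_one.trans ((one_le_cfA hα one_ne_zero).trans (hbd 1 le_rfl))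
  have hsum : ∑ k ∈ Icc 1 (ℓ + 1), (cfA α k : ℝ) ≤ ((ℓ : ℝ) + 1) * c := by
    simpa using sum_le_card_nsmul (Icc 1 (ℓ + 1)) (fun k ↦ (cfA α k : ℝ)) c
      fun k hk ↦ hbd k (mem_Icc.1 hk).1
  calc _ ≤ (c / √(cfQ α ℓ)) * (((ℓ : ℝ) + 1) * c) := by
        gcongr
        · exact sum_nonneg fun k hk ↦
            zero_le_one.trans (one_le_cfA hα (Nat.pos_iff_ne_zero.1 (mem_Icc.1 hk).1))
        · exact hbd _ (Nat.le_add_left 1 ℓ)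
    _ = c ^ 2 * (((ℓ : ℝ) + 1) / √(cfQ α ℓ)) := by ring

end ContinuedFraction

theorem sqrt_two_pow_le_of_two_mul_le {q : ℕ → ℝ} (h₀ : 1 ≤ q 0) (h₁ : 1 ≤ q 1)
    (hq : ∀ n, 2 * q n ≤ q (n + 2)) (n : ℕ) : √2 ^ n ≤ √2 * q n := by
  have hs : 1 ≤ √2 := Real.one_le_sqrt.2 one_le_two
  induction n using Nat.twoStepInduction with
  | zero => simpa using hs.trans (le_mul_of_one_le_right (by positivity) h₀)
  | one => simpa using le_mul_of_one_le_right (Real.sqrt_nonneg 2) h₁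
  | more n ih _ =>
    calc √2 ^ (n + 2) = 2 * √2 ^ n := by rw [pow_add, Real.sq_sqrt zero_le_two, mul_comm]
      _ ≤ 2 * (√2 * q n) := by gcongr
      _ = √2 * (2 * q n) := by ring
      _ ≤ √2 * q (n + 2) := by gcongr; exact hq n

theorem summable_succ_div_sqrt_of_pow_le {q : ℕ → ℝ} {r K : ℝ} (hr : 1 < r)
    (hq : ∀ n, r ^ n ≤ K * q n) : Summable fun n : ℕ ↦ ((n : ℝ) + 1) / √(q n) := by
  set ρ := (√r)⁻¹
  have hsr : 1 < √r := Real.lt_sqrt_of_sq_lt (by simpa using hr)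
  have hρ : ‖ρ‖ < 1 := by
    rw [Real.norm_of_nonneg (by positivity)]; exact inv_lt_one_of_one_lt₀ hsr
  have hgeom : Summable fun n : ℕ ↦ √K * (((n : ℝ) + 1) * ρ ^ n) := by
    have := (summable_pow_mul_geometric_of_norm_lt_one 1 hρ).add
      (summable_geometric_of_norm_lt_one hρ)
    simpa only [pow_one, add_mul, one_mul] using this.mul_left (√K)
  refine Summable.of_nonneg_of_le (fun n ↦ by positivity) (fun n ↦ ?_) hgeom
  rcases le_or_gt (q n) 0 with hqn | hqn
  · rw [Real.sqrt_eq_zero'.2 hqn, div_zero]; positivity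
  have hsq : √r ^ n ≤ √K * √(q n) := by
    rw [← Real.sqrt_mul' K hqn.le, Real.le_sqrt' (by positivity), ← pow_mul, mul_comm,
      pow_mul, Real.sq_sqrt (by linarith)]
    exact hq n
  rw [div_le_iff₀ (Real.sqrt_pos.2 hqn)]
  calc (n : ℝ) + 1 = ((n : ℝ) + 1) * ρ ^ n * √r ^ n := by
        rw [mul_assoc, ← mul_pow, inv_mul_cancel₀ (by positivity), one_pow, mul_one]
    _ ≤ ((n : ℝ) + 1) * ρ ^ n * (√K * √(q n)) := by gcongr
    _ = √K * (((n : ℝ) + 1) * ρ ^ n) * √(q n) := by ring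

theorem condStar_of_bounded_partial_quotients_general
    (α : ℝ) (hα : Irrational α)
    (c : ℝ) (hbd : ∀ i : ℕ, 1 ≤ i → (cfA α i : ℝ) ≤ c) :
    ∃ C > 0, ∀ m : ℕ,
      ∑ ℓ ∈ Finset.range (m + 1),
        ((cfA α (ℓ + 1) : ℝ) / Real.sqrt (cfQ α ℓ)) *
          ∑ k ∈ Finset.Icc 1 (ℓ + 1), (cfA α k : ℝ) < C := by
  have hgrowth := sqrt_two_pow_le_of_two_mul_le (one_le_cfQ hα 0) (one_le_cfQ hα 1)
    (two_mul_cfQ_le_cfQ_add_two hα)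
  have hsum := summable_succ_div_sqrt_of_pow_le Real.one_lt_sqrt_two hgrowth
  refine ⟨c ^ 2 * ∑' ℓ : ℕ, ((ℓ : ℝ) + 1) / √(cfQ α ℓ) + 1, by positivity, fun m ↦ ?_⟩
  calc _ ≤ ∑ ℓ ∈ range (m + 1), c ^ 2 * (((ℓ : ℝ) + 1) / √(cfQ α ℓ)) :=
        sum_le_sum fun ℓ _ ↦ cfA_div_sqrt_cfQ_mul_sum_le hα hbd ℓ
    _ ≤ c ^ 2 * ∑' ℓ : ℕ, ((ℓ : ℝ) + 1) / √(cfQ α ℓ) := by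
      rw [← mul_sum]; gcongr; exact hsum.sum_le_tsum _ fun ℓ _ ↦ by positivity
    _ < _ := lt_add_one _

/-- If the partial quotients of the continued fraction expansion of the irrational
number `α > 0` are uniformly bounded, then `α` satisfies condition (*):
`∑_{ℓ=0}^m a_{ℓ+1} q_ℓ^{-1/2} ∑_{k=1}^{ℓ+1} a_k` is bounded uniformly in `m`. -/
theorem condStar_of_bounded_partial_quotients
    (α : ℝ) (hα : Irrational α) (hαpos : 0 < α)
    (c : ℝ) (hc : 0 < c) (hbd : ∀ i : ℕ, 1 ≤ i → (cfA α i : ℝ) ≤ c) :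
    ∃ C > 0, ∀ m : ℕ,
      ∑ ℓ ∈ Finset.range (m + 1),
        ((cfA α (ℓ + 1) : ℝ) / Real.sqrt (cfQ α ℓ)) *
          ∑ k ∈ Finset.Icc 1 (ℓ + 1), (cfA α k : ℝ) < C :=
  condStar_of_bounded_partial_quotients_general α hα c hbd
end

section
/- Let α > 0 be irrational, let a < b be reals, and let h : ℝ → [0,∞) be continuous with h = 0 outside [a,b]. Let u = (1,α)/√(1+α²), v = (−α,1)/√(1+α²), and let ω = ∑_{g∈ℤ²} h(⟨g,v⟩)·δ_{⟨g,u⟩} be the associated weighted Dirac comb on ℝ. Then the density of ω exists and equals ∫_a^b h(t) dt; that is, ω([−T,T])/(2T) converges to ∫_a^b h(t) dt as T → ∞. -/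
/-!
A lattice point `g = (m, n)` has physical coordinate `x = (m + nα)/s` and internal coordinate
`t = (n - mα)/s`, where `s = √(1 + α²)`; these satisfy `x = m s + α t`. Since `h` vanishes off
`[a, b]`, every point of positive weight lies within `|α| max(|a|, |b|)` of `m s`, so up to a
bounded number of columns, `ω([-T, T])` equals the total weight of the columns `|m| ≤ T/s`. The
weight of column `m` is `F(-mα)`, where `F(y) = ∑ₙ h((y + n)/s)` is the `1`-periodisation of
`h(·/s)`, and `∫₀¹ F = s ∫ₐᵇ h`. Weyl's equidistribution theorem for the irrational rotation by
`α` (test against the characters, where it is a geometric sum, then use the density of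
trigonometric polynomials and the equicontinuity of the averaging operators) gives
`∑_{|m| ≤ M} F(-mα) ~ (2M + 1) s ∫ₐᵇ h`, hence the density `∫ₐᵇ h`.
-/

open MeasureTheory Filter Set Topology
open scoped Pointwise ENNReal

theorem ContinuousLinearMap.tendsto_apply_of_dense_span {ι 𝕜 E F : Type*}
    [NontriviallyNormedField 𝕜] [SeminormedAddCommGroup E] [NormedSpace 𝕜 E]
    [NormedAddCommGroup F] [NormedSpace 𝕜 F] {l : Filter ι} {A : ι → E →L[𝕜] F}
    {B : E →L[𝕜] F} {C : ℝ} (hA : ∀ i, ‖A i‖ ≤ C) {s : Set E}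
    (hs : (Submodule.span 𝕜 s).topologicalClosure = ⊤)
    (h : ∀ x ∈ s, Tendsto (A · x) l (𝓝 (B x))) (x : E) :
    Tendsto (A · x) l (𝓝 (B x)) := by
  let S : Submodule 𝕜 E :=
    { carrier := {x | Tendsto (A · x) l (𝓝 (B x))}
      add_mem' := fun {x y} hx hy => by simpa using hx.add hy
      zero_mem' := by simpa using tendsto_const_nhds
      smul_mem' := fun c x hx => by simpa using hx.const_smul c }
  have hequi : Equicontinuous fun i => (A i : E → F) :=
    ((NormedSpace.equicontinuous_TFAE A).out 5 1).mp (⟨C, hA⟩ : ∃ C, ∀ i, ‖A i‖ ≤ C)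
  have hclosed : IsClosed (S : Set E) := hequi.isClosed_setOfPred_tendsto B.continuous
  have hspan : Submodule.span 𝕜 s ≤ S := Submodule.span_le.mpr h
  exact Submodule.topologicalClosure_minimal _ hspan hclosed (hs ▸ Submodule.mem_top)

namespace ContinuousMap

variable {X E : Type*} (𝕜 : Type*) [TopologicalSpace X] [CompactSpace X] [MeasurableSpace X]
  [BorelSpace X] [NormedAddCommGroup E] [SecondCountableTopologyEither X E] [NormedSpace ℝ E]
  [CompleteSpace E] [NontriviallyNormedField 𝕜] [NormedSpace 𝕜 E] [SMulCommClass ℝ 𝕜 E]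
  (μ : Measure X) [IsFiniteMeasure μ]

noncomputable def integralCLM : C(X, E) →L[𝕜] E :=
  (L1.integralCLM' 𝕜).comp (toLp 1 μ 𝕜)

theorem integralCLM_apply (f : C(X, E)) : integralCLM 𝕜 μ f = ∫ x, f x ∂μ := by
  rw [integralCLM, ContinuousLinearMap.comp_apply, ← L1.integral_eq' 𝕜, L1.integral_eq_integral]
  exact integral_congr_ae (coeFn_toLp μ f)

end ContinuousMap

theorem card_Icc_neg_self (M : ℕ) : (Finset.Icc (-(M : ℤ)) M).card = 2 * M + 1 := by
  simp only [Int.card_Icc]; omega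

theorem norm_sum_Icc_zpow_le {𝕜 : Type*} [NormedField 𝕜] {z : 𝕜} (hz : ‖z‖ = 1) (hz1 : z ≠ 1)
    (M : ℕ) : ‖∑ m ∈ Finset.Icc (-(M : ℤ)) M, z ^ m‖ ≤ 2 / ‖1 - z‖ := by
  have hz0 : z ≠ 0 := by rintro rfl; simp at hz
  have hsum : ∑ m ∈ Finset.Icc (-(M : ℤ)) M, z ^ m =
      z ^ (-(M : ℤ)) * ∑ k ∈ Finset.range (2 * M + 1), z ^ k := by
    rw [Int.Icc_eq_finset_map, Finset.sum_map, Finset.mul_sum]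
    refine Finset.sum_congr (by congr 1; omega) fun k _ => ?_
    simp [zpow_add₀ hz0]
  rw [hsum, geom_sum_eq hz1, norm_mul, norm_zpow, hz, one_zpow, one_mul, norm_div,
    norm_sub_rev z]
  gcongr
  calc ‖z ^ (2 * M + 1) - 1‖ ≤ ‖z ^ (2 * M + 1)‖ + ‖(1 : 𝕜)‖ := norm_sub_le _ _
    _ = 2 := by rw [norm_pow, hz]; norm_num

section SymmOrbitAverage

variable {T : ℝ}

noncomputable def symmOrbitAverage (ξ : AddCircle T) (M : ℕ) : C(AddCircle T, ℂ) →L[ℂ] ℂ :=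
  (2 * M + 1 : ℂ)⁻¹ • ∑ m ∈ Finset.Icc (-(M : ℤ)) M, ContinuousMap.evalCLM ℂ (m • ξ)

theorem symmOrbitAverage_apply (ξ : AddCircle T) (M : ℕ) (f : C(AddCircle T, ℂ)) :
    symmOrbitAverage ξ M f = (2 * M + 1 : ℂ)⁻¹ * ∑ m ∈ Finset.Icc (-(M : ℤ)) M, f (m • ξ) := by
  simp [symmOrbitAverage]

theorem norm_symmOrbitAverage_le [Fact (0 < T)] (ξ : AddCircle T) (M : ℕ) :
    ‖symmOrbitAverage ξ M‖ ≤ 1 := by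
  refine ContinuousLinearMap.opNorm_le_bound _ zero_le_one fun f => ?_
  have hM : ‖(2 * M + 1 : ℂ)‖ = 2 * M + 1 := by norm_cast
  rw [symmOrbitAverage_apply, norm_mul, norm_inv, hM, one_mul, inv_mul_le_iff₀ (by positivity)]
  calc ‖∑ m ∈ Finset.Icc (-(M : ℤ)) M, f (m • ξ)‖
      ≤ ∑ m ∈ Finset.Icc (-(M : ℤ)) M, ‖f (m • ξ)‖ := norm_sum_le _ _
    _ ≤ ∑ _m ∈ Finset.Icc (-(M : ℤ)) M, ‖f‖ :=
      Finset.sum_le_sum fun m _ => f.norm_coe_le_norm _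
    _ = (2 * M + 1) * ‖f‖ := by rw [Finset.sum_const, card_Icc_neg_self, nsmul_eq_mul]; simp

theorem fourier_apply_ne_one [hT : Fact (0 < T)] {ξ : AddCircle T} (hξ : ¬IsOfFinAddOrder ξ)
    {n : ℤ} (hn : n ≠ 0) : fourier n ξ ≠ 1 := by
  intro h
  refine hξ (isOfFinAddOrder_iff_zsmul_eq_zero.mpr ⟨n, hn, ?_⟩)
  apply AddCircle.injective_toCircle (T := T) hT.out.ne'
  apply Circle.coe_injective
  rw [← fourier_apply, h, AddCircle.toCircle_zero, Circle.coe_one]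

theorem tendsto_symmOrbitAverage_fourier [hT : Fact (0 < T)] {ξ : AddCircle T}
    (hξ : ¬IsOfFinAddOrder ξ) (n : ℤ) :
    Tendsto (fun M => symmOrbitAverage ξ M (fourier n)) atTop
      (𝓝 (∫ x, fourier n x ∂(AddCircle.haarAddCircle (T := T)))) := by
  rcases eq_or_ne n 0 with rfl | hn
  · have h1 (M : ℕ) : symmOrbitAverage ξ M (fourier 0) = 1 := by
      rw [symmOrbitAverage_apply]
      simp only [fourier_zero, Finset.sum_const, card_Icc_neg_self, nsmul_eq_mul, mul_one]
      push_cast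
      exact inv_mul_cancel₀ (by norm_cast)
    simp [h1]
  have hint : ∫ x, fourier n x ∂AddCircle.haarAddCircle = 0 :=
    integral_eq_zero_of_add_right_eq_neg (fourier_add_half_inv_index hn hT.out)
  set z := fourier n ξ
  have hz : ‖z‖ = 1 := Circle.norm_coe _
  have hpow (m : ℤ) : fourier n (m • ξ) = z ^ m := by
    rw [fourier_apply, smul_comm, AddCircle.toCircle_zsmul, Circle.coe_zpow, ← fourier_apply]
  have hbound (M : ℕ) : ‖symmOrbitAverage ξ M (fourier n)‖ ≤ 2 / ‖1 - z‖ * (2 * M + 1 : ℝ)⁻¹ := by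
    have hM : ‖(2 * M + 1 : ℂ)‖ = 2 * M + 1 := by norm_cast
    rw [symmOrbitAverage_apply, norm_mul, norm_inv, hM, mul_comm]
    simp only [hpow]
    gcongr
    exact norm_sum_Icc_zpow_le hz (fourier_apply_ne_one hξ hn) M
  rw [hint, tendsto_zero_iff_norm_tendsto_zero]
  refine squeeze_zero (fun M => norm_nonneg _) hbound ?_
  rw [← mul_zero (2 / ‖1 - z‖)]
  refine tendsto_const_nhds.mul (tendsto_inv_atTop_zero.comp ?_)
  exact tendsto_atTop_add_const_right _ _
    (tendsto_natCast_atTop_atTop.const_mul_atTop two_pos)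

theorem tendsto_symmOrbitAverage [Fact (0 < T)] {ξ : AddCircle T} (hξ : ¬IsOfFinAddOrder ξ)
    (f : C(AddCircle T, ℂ)) :
    Tendsto (fun M => symmOrbitAverage ξ M f) atTop
      (𝓝 (∫ x, f x ∂(AddCircle.haarAddCircle (T := T)))) := by
  rw [← ContinuousMap.integralCLM_apply ℂ]
  refine ContinuousLinearMap.tendsto_apply_of_dense_span (norm_symmOrbitAverage_le ξ)
    span_fourier_closure_eq_top ?_ f
  rintro _ ⟨n, rfl⟩
  rw [ContinuousMap.integralCLM_apply]
  exact tendsto_symmOrbitAverage_fourier hξ n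

end SymmOrbitAverage

theorem tendsto_sum_Icc_div_of_irrational {α : ℝ} (hα : Irrational α) {F : ℝ → ℝ}
    (hF : Continuous F) (hper : Function.Periodic F 1) :
    Tendsto (fun M : ℕ => (∑ m ∈ Finset.Icc (-(M : ℤ)) M, F (m * α)) / (2 * M + 1)) atTop
      (𝓝 (∫ t in (0 : ℝ)..1, F t)) := by
  have hξ : ¬IsOfFinAddOrder (α : AddCircle (1 : ℝ)) :=
    AddCircle.not_isOfFinAddOrder_iff_forall_rat_ne_div.mpr fun q => by
      simpa using (hα.ne_rat q).symm
  let G : C(AddCircle (1 : ℝ), ℂ) :=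
    ⟨fun y => (hper.lift y : ℂ), Complex.continuous_ofReal.comp (continuous_coinduced_dom.mpr hF)⟩
  have hG (M : ℕ) : symmOrbitAverage (α : AddCircle (1 : ℝ)) M G =
      ((∑ m ∈ Finset.Icc (-(M : ℤ)) M, F (m * α)) / (2 * M + 1) : ℝ) := by
    rw [symmOrbitAverage_apply]
    push_cast
    rw [div_eq_inv_mul]
    congr 1
    refine Finset.sum_congr rfl fun m _ => ?_
    rw [← AddCircle.coe_zsmul, zsmul_eq_mul]
    rfl
  have hint : ∫ y, G y ∂AddCircle.haarAddCircle = ((∫ t in (0 : ℝ)..1, F t : ℝ) : ℂ) := by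
    rw [AddCircle.integral_haarAddCircle, inv_one, one_smul,
      ← AddCircle.intervalIntegral_preimage 1 0, zero_add, ← intervalIntegral.integral_ofReal]
    rfl
  rw [← tendsto_ofReal_iff, ← hint]
  simpa only [hG] using tendsto_symmOrbitAverage hξ G

section Periodization

theorem periodic_tsum_comp_add_int {E : Type*} [AddCommMonoid E] [TopologicalSpace E]
    (f : ℝ → E) : Function.Periodic (fun x => ∑' n : ℤ, f (x + n)) 1 := by
  intro x
  show ∑' n : ℤ, f (x + 1 + n) = ∑' n : ℤ, f (x + n)
  rw [← (Equiv.addRight (1 : ℤ)).tsum_eq (fun n : ℤ => f (x + n))]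
  simp only [Equiv.coe_addRight, Int.cast_add, Int.cast_one]
  exact tsum_congr fun n => congrArg f (by ring)

variable {E : Type*} [NormedAddCommGroup E] {f : C(ℝ, E)}

theorem HasCompactSupport.summable_norm_restrict_comp_addRight (hf : HasCompactSupport f)
    (K : TopologicalSpace.Compacts ℝ) :
    Summable fun n : ℤ => ‖(f.comp (ContinuousMap.addRight (n : ℝ))).restrict K‖ := by
  apply summable_of_hasFiniteSupport
  have hfin : (((↑) : ℤ → ℝ) ⁻¹' (tsupport f + -(K : Set ℝ))).Finite :=
    (Int.isClosedEmbedding_coe_real.isCompact_preimage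
      (IsCompact.add hf K.isCompact.neg)).finite_of_discrete
  refine hfin.subset fun n hn => ?_
  obtain ⟨x, hx⟩ : ∃ x : K, f (x + n) ≠ 0 := by
    by_contra! h
    exact hn (norm_eq_zero.mpr (ContinuousMap.ext h))
  exact ⟨x + n, subset_tsupport _ hx, -x, Set.neg_mem_neg.mpr x.2, by ring⟩

variable (hf : HasCompactSupport f)
include hf

theorem HasCompactSupport.summable_comp_add_int [CompleteSpace E] (x : ℝ) :
    Summable fun n : ℤ => f (x + n) :=
  ContinuousMap.summable_apply
    (ContinuousMap.summable_of_locally_summable_norm hf.summable_norm_restrict_comp_addRight) x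

theorem HasCompactSupport.continuous_tsum_comp_add_int [CompleteSpace E] :
    Continuous fun x => ∑' n : ℤ, f (x + n) := by
  have hsum := ContinuousMap.summable_of_locally_summable_norm
    hf.summable_norm_restrict_comp_addRight
  convert (∑' n : ℤ, f.comp (ContinuousMap.addRight (n : ℝ))).continuous using 1
  ext x
  rw [← ContinuousMap.tsum_apply hsum]
  rfl

theorem HasCompactSupport.intervalIntegral_tsum_comp_add_int [NormedSpace ℝ E] :
    ∫ x in (0 : ℝ)..1, ∑' n : ℤ, f (x + n) = ∫ x, f x := by
  have hswap := intervalIntegral.tsum_intervalIntegral_eq_of_summable_norm (a := 0) (b := 1)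
    (hf.summable_norm_restrict_comp_addRight _)
  simp only [ContinuousMap.comp_apply, ContinuousMap.coe_addRight] at hswap
  rw [← hswap]
  exact (f.continuous.integrable_of_hasCompactSupport hf).hasSum_intervalIntegral_comp_add_int
    |>.tsum_eq

end Periodization

theorem integral_eq_intervalIntegral_of_forall_notMem_Icc {E : Type*} [NormedAddCommGroup E]
    [NormedSpace ℝ E] {f : ℝ → E} {a b : ℝ} (hab : a ≤ b) (hf : ∀ x ∉ Icc a b, f x = 0) :
    ∫ x, f x = ∫ x in a..b, f x := by
  rw [intervalIntegral.integral_of_le hab, ← integral_Icc_eq_integral_Ioc,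
    setIntegral_eq_integral_of_forall_compl_eq_zero hf]

theorem MeasureTheory.Measure.sum_smul_dirac_apply {ι X : Type*} [MeasurableSpace X]
    (c : ι → ℝ≥0∞) (x : ι → X) {S : Set X} (hS : MeasurableSet S) :
    Measure.sum (fun i => c i • Measure.dirac (x i)) S = ∑' i, (x ⁻¹' S).indicator c i := by
  rw [Measure.sum_apply _ hS]
  refine tsum_congr fun i => ?_
  by_cases hi : x i ∈ S <;> simp [Measure.dirac_apply' _ hS, hi]

theorem ENNReal.tsum_indicator_le_of_inter_support_subset {ι : Type*} {w : ι → ℝ≥0∞}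
    {P Q : Set ι} (h : P ∩ Function.support w ⊆ Q) :
    ∑' i, P.indicator w i ≤ ∑' i, Q.indicator w i := by
  rw [← Set.indicator_inter_support]
  exact ENNReal.tsum_le_tsum (Set.indicator_le_indicator_of_subset h fun _ => zero_le)

theorem mem_Icc_neg_self_iff_abs_le {m : ℤ} {M : ℕ} :
    m ∈ Finset.Icc (-(M : ℤ)) M ↔ |(m : ℝ)| ≤ M := by
  rw [Finset.mem_Icc, ← abs_le, ← Int.cast_abs]
  exact_mod_cast Iff.rfl

theorem tendsto_comp_div_of_abs_sub_le {S : ℕ → ℝ} {L s B : ℝ} (hs : 0 < s)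
    (hS : Tendsto (fun M : ℕ => S M / (2 * M + 1)) atTop (𝓝 L)) {N : ℝ → ℕ}
    (hN : ∀ᶠ T in atTop, |(N T : ℝ) - T / s| ≤ B) :
    Tendsto (fun T => S (N T) / (2 * T)) atTop (𝓝 (L / s)) := by
  have hNtop : Tendsto N atTop atTop := by
    refine tendsto_natCast_atTop_iff.mp (tendsto_atTop_mono' _ ?_
      (tendsto_atTop_add_const_right _ (-B) (tendsto_id.atTop_div_const hs)))
    filter_upwards [hN] with T hT
    show T / s + -B ≤ N T
    linarith [(abs_le.mp hT).1]
  have hratio : Tendsto (fun T => (2 * (N T : ℝ) + 1) / (2 * T)) atTop (𝓝 s⁻¹) := by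
    rw [tendsto_iff_norm_sub_tendsto_zero]
    refine squeeze_zero' (Eventually.of_forall fun T => norm_nonneg _) ?_
      ((tendsto_const_nhds (x := 2 * B + 1)).div_atTop (tendsto_id.const_mul_atTop two_pos))
    filter_upwards [hN, eventually_gt_atTop 0] with T hT hT0
    have hrw : (2 * (N T : ℝ) + 1) / (2 * T) - s⁻¹ = (2 * ((N T : ℝ) - T / s) + 1) / (2 * T) := by
      field_simp
      ring
    rw [Real.norm_eq_abs, hrw, abs_div, abs_of_pos (by positivity : (0 : ℝ) < 2 * T)]
    refine div_le_div_of_nonneg_right ?_ (by positivity)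
    calc |2 * ((N T : ℝ) - T / s) + 1| ≤ |2 * ((N T : ℝ) - T / s)| + |1| := abs_add_le _ _
      _ = 2 * |(N T : ℝ) - T / s| + 1 := by rw [abs_mul, abs_two, abs_one]
      _ ≤ 2 * B + 1 := by linarith
  refine ((hS.comp hNtop).mul hratio).congr' ?_ |>.trans (by rw [div_eq_mul_inv])
  filter_upwards [eventually_gt_atTop 0] with T hT
  have : (2 * (N T : ℝ) + 1) ≠ 0 := by positivity
  simp only [Function.comp_apply]
  field_simp

section LatticeComb

variable {w : ℤ × ℤ → ℝ≥0∞} {x : ℤ × ℤ → ℝ} {R : ℤ → ℝ} {s K : ℝ}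

theorem tsum_indicator_fst_preimage_Icc (hR : ∀ m, ∑' n, w (m, n) = ENNReal.ofReal (R m))
    (hR0 : ∀ m, 0 ≤ R m) (M : ℕ) :
    ∑' g, (Prod.fst ⁻¹' ↑(Finset.Icc (-(M : ℤ)) M)).indicator w g =
      ENNReal.ofReal (∑ m ∈ Finset.Icc (-(M : ℤ)) M, R m) := by
  have hcolumn (m : ℤ) : ∑' n, (Prod.fst ⁻¹' ↑(Finset.Icc (-(M : ℤ)) M)).indicator w (m, n) =
      (↑(Finset.Icc (-(M : ℤ)) M) : Set ℤ).indicator (fun m => ∑' n, w (m, n)) m := by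
    by_cases hm : m ∈ Finset.Icc (-(M : ℤ)) M
    · rw [Set.indicator_of_mem (Finset.mem_coe.mpr hm)]
      exact tsum_congr fun n => Set.indicator_of_mem (by simpa using hm) w
    · rw [Set.indicator_of_notMem (mt Finset.mem_coe.mp hm)]
      exact ENNReal.tsum_eq_zero.mpr fun n => Set.indicator_of_notMem (by simpa using hm) w
  rw [ENNReal.tsum_prod', tsum_congr hcolumn, ← sum_eq_tsum_indicator,
    ENNReal.ofReal_sum_of_nonneg fun m _ => hR0 m]
  exact Finset.sum_congr rfl fun m _ => hR m

variable (hx : ∀ g, w g ≠ 0 → |x g - g.1 * s| ≤ K) (hR : ∀ m, ∑' n, w (m, n) = ENNReal.ofReal (R m))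
  (hR0 : ∀ m, 0 ≤ R m)
include hx hR hR0

theorem ofReal_sum_Icc_le_tsum_indicator (hs : 0 ≤ s) {M : ℕ} {T : ℝ} (hMT : M * s + K ≤ T) :
    ENNReal.ofReal (∑ m ∈ Finset.Icc (-(M : ℤ)) M, R m) ≤
      ∑' g, (x ⁻¹' Icc (-T) T).indicator w g := by
  rw [← tsum_indicator_fst_preimage_Icc hR hR0]
  refine ENNReal.tsum_indicator_le_of_inter_support_subset fun g ⟨hg, hw⟩ => ?_
  have hgM : |(g.1 : ℝ)| ≤ M := mem_Icc_neg_self_iff_abs_le.mp hg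
  have hxg := hx g hw
  rw [mem_preimage, mem_Icc, ← abs_le]
  calc |x g| = |(g.1 : ℝ) * s + (x g - g.1 * s)| := by rw [add_sub_cancel]
    _ ≤ |(g.1 : ℝ) * s| + |x g - g.1 * s| := abs_add_le _ _
    _ ≤ M * s + K := by rw [abs_mul, abs_of_nonneg hs]; gcongr
    _ ≤ T := hMT

theorem tsum_indicator_le_ofReal_sum_Icc (hs : 0 < s) {M : ℕ} {T : ℝ} (hTM : T + K ≤ M * s) :
    ∑' g, (x ⁻¹' Icc (-T) T).indicator w g ≤
      ENNReal.ofReal (∑ m ∈ Finset.Icc (-(M : ℤ)) M, R m) := by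
  rw [← tsum_indicator_fst_preimage_Icc hR hR0]
  refine ENNReal.tsum_indicator_le_of_inter_support_subset fun g ⟨hg, hw⟩ => ?_
  have hgT : |x g| ≤ T := abs_le.mpr hg
  have hxg := hx g hw
  refine mem_Icc_neg_self_iff_abs_le.mpr (le_of_mul_le_mul_right ?_ hs)
  calc |(g.1 : ℝ)| * s = |x g - (x g - g.1 * s)| := by rw [sub_sub_cancel, abs_mul, abs_of_pos hs]
    _ ≤ |x g| + |x g - g.1 * s| := abs_sub _ _
    _ ≤ M * s := by linarith

theorem tendsto_sum_smul_dirac_Icc_div (hs : 0 < s) {L : ℝ}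
    (hL : Tendsto (fun M : ℕ => (∑ m ∈ Finset.Icc (-(M : ℤ)) M, R m) / (2 * M + 1)) atTop
      (𝓝 L)) :
    Tendsto (fun T => (Measure.sum (fun g => w g • Measure.dirac (x g)) (Icc (-T) T)).toReal /
      (2 * T)) atTop (𝓝 (L / s)) := by
  have hKs := le_abs_self (K / s)
  have hKs' := neg_abs_le (K / s)
  -- The columns `|m| ≤ ⌊(T - K)/s⌋` lie inside `[-T, T]`, which lies inside the columns
  -- `|m| ≤ ⌈(T + K)/s⌉`.
  have hlo := tendsto_comp_div_of_abs_sub_le hs hL (N := fun T => ⌊(T - K) / s⌋₊)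
    (B := 1 + |K / s|) <| by
      filter_upwards [eventually_ge_atTop K] with T hT
      have := Nat.floor_le (div_nonneg (sub_nonneg.mpr hT) hs.le)
      have := Nat.lt_floor_add_one ((T - K) / s)
      rw [sub_div] at *
      exact abs_le.mpr ⟨by linarith, by linarith⟩
  have hhi := tendsto_comp_div_of_abs_sub_le hs hL (N := fun T => ⌈(T + K) / s⌉₊)
    (B := 1 + |K / s|) <| by
      filter_upwards [eventually_ge_atTop (-K)] with T hT
      have := Nat.le_ceil ((T + K) / s)
      have := Nat.ceil_lt_add_one (div_nonneg (neg_le_iff_add_nonneg.mp hT) hs.le)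
      rw [add_div] at *
      exact abs_le.mpr ⟨by linarith, by linarith⟩
  refine tendsto_of_tendsto_of_tendsto_of_le_of_le' hlo hhi ?_ ?_ <;>
    filter_upwards [eventually_ge_atTop K, eventually_gt_atTop 0] with T hT hT0 <;>
    gcongr <;>
    rw [Measure.sum_smul_dirac_apply _ _ measurableSet_Icc]
  all_goals
    have hupper := tsum_indicator_le_ofReal_sum_Icc hx hR hR0 hs (M := ⌈(T + K) / s⌉₊) (T := T)
      (by rw [← div_le_iff₀ hs]; exact Nat.le_ceil _)
  · refine (ENNReal.ofReal_le_iff_le_toReal (ne_top_of_le_ne_top ENNReal.ofReal_ne_top hupper)).mp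
      (ofReal_sum_Icc_le_tsum_indicator hx hR hR0 hs.le ?_)
    rw [← le_sub_iff_add_le, ← le_div_iff₀ hs]
    exact Nat.floor_le (div_nonneg (sub_nonneg.mpr hT) hs.le)
  · exact ENNReal.toReal_le_of_le_ofReal (Finset.sum_nonneg fun m _ => hR0 m) hupper

end LatticeComb

theorem add_mul_div_sqrt_sub_mul_sqrt (α m n : ℝ) :
    (m + n * α) / √(1 + α ^ 2) - m * √(1 + α ^ 2) = α * ((n - m * α) / √(1 + α ^ 2)) := by
  have hs : 0 < √(1 + α ^ 2) := by positivity
  field_simp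
  linear_combination (-m) * Real.sq_sqrt (by positivity : (0 : ℝ) ≤ 1 + α ^ 2)

theorem weightedCPS_density_general (α : ℝ) (hα : Irrational α)
    (a b : ℝ) (hab : a < b)
    (h : ℝ → ℝ) (hcont : Continuous h) (hnonneg : ∀ x : ℝ, 0 ≤ h x)
    (hsupp : ∀ x : ℝ, x ∉ Set.Icc a b → h x = 0)
    (u v : ℝ × ℝ)
    (hu : u = (1 / Real.sqrt (1 + α ^ 2), α / Real.sqrt (1 + α ^ 2)))
    (hv : v = (-α / Real.sqrt (1 + α ^ 2), 1 / Real.sqrt (1 + α ^ 2)))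
    (ω : Measure ℝ)
    (hω : ω = Measure.sum (fun g : ℤ × ℤ =>
      ENNReal.ofReal (h ((g.1 : ℝ) * v.1 + (g.2 : ℝ) * v.2)) •
        Measure.dirac ((g.1 : ℝ) * u.1 + (g.2 : ℝ) * u.2))) :
    Tendsto (fun T : ℝ => (ω (Set.Icc (-T) T)).toReal / (2 * T)) atTop
      (nhds (∫ t in a..b, h t)) := by
  set s := Real.sqrt (1 + α ^ 2)
  have hs : 0 < s := by positivity
  have hω' : ω = Measure.sum fun g : ℤ × ℤ => ENNReal.ofReal (h ((g.2 - g.1 * α) / s)) •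
      Measure.dirac ((g.1 + g.2 * α) / s) := by
    rw [hω, hu, hv]
    congr! 4 with g
    · congr 1
      dsimp only
      ring
    · dsimp only
      ring
  have hnear (g : ℤ × ℤ) (hg : ENNReal.ofReal (h ((g.2 - g.1 * α) / s)) ≠ 0) :
      |(g.1 + g.2 * α) / s - g.1 * s| ≤ |α| * max |a| |b| := by
    have ht : (g.2 - g.1 * α) / s ∈ Icc a b := by_contra fun hnot => hg (by simp [hsupp _ hnot])
    rw [add_mul_div_sqrt_sub_mul_sqrt, abs_mul]
    gcongr
    exact abs_le_max_abs_abs ht.1 ht.2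
  let f : C(ℝ, ℝ) := ⟨fun y => h (s⁻¹ * y), by fun_prop⟩
  have hf : HasCompactSupport f :=
    (HasCompactSupport.intro (f := h) isCompact_Icc hsupp).comp_smul (c := s⁻¹) (inv_ne_zero hs.ne')
  have hcolumn (m : ℤ) : ∑' n : ℤ, ENNReal.ofReal (h ((n - m * α) / s)) =
      ENNReal.ofReal (∑' n : ℤ, f (m * -α + n)) := by
    rw [ENNReal.ofReal_tsum_of_nonneg (f := fun n : ℤ => f (m * -α + n)) (fun n => hnonneg _)
      (hf.summable_comp_add_int _)]
    exact tsum_congr fun n => congrArg (ENNReal.ofReal ∘ h) (by ring)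
  have hweyl := tendsto_sum_Icc_div_of_irrational hα.neg hf.continuous_tsum_comp_add_int
    (periodic_tsum_comp_add_int f)
  rw [hf.intervalIntegral_tsum_comp_add_int, show ∫ y, f y = ∫ y, h (s⁻¹ * y) from rfl,
    Measure.integral_comp_inv_mul_left, abs_of_pos hs,
    integral_eq_intervalIntegral_of_forall_notMem_Icc hab.le hsupp, smul_eq_mul] at hweyl
  rw [hω', ← mul_div_cancel_left₀ (∫ t in a..b, h t) hs.ne']
  exact tendsto_sum_smul_dirac_Icc_div hnear hcolumn (fun m => tsum_nonneg fun n => hnonneg _) hs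
    hweyl

/-- The density of the weighted `1×1` cut-and-project Dirac comb
`ω = ∑_{g ∈ ℤ²} h(⟨g,v⟩)·δ_{⟨g,u⟩}` with lattice `ℤ²`, window `[a,b]` and nonnegative
continuous weight function `h` exists and equals `∫_a^b h(t) dt`. -/
theorem weightedCPS_density (α : ℝ) (hα : Irrational α) (hαpos : 0 < α)
    (a b : ℝ) (hab : a < b)
    (h : ℝ → ℝ) (hcont : Continuous h) (hnonneg : ∀ x : ℝ, 0 ≤ h x)
    (hsupp : ∀ x : ℝ, x ∉ Set.Icc a b → h x = 0)
    (u v : ℝ × ℝ)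
    (hu : u = (1 / Real.sqrt (1 + α ^ 2), α / Real.sqrt (1 + α ^ 2)))
    (hv : v = (-α / Real.sqrt (1 + α ^ 2), 1 / Real.sqrt (1 + α ^ 2)))
    (ω : Measure ℝ)
    (hω : ω = Measure.sum (fun g : ℤ × ℤ =>
      ENNReal.ofReal (h ((g.1 : ℝ) * v.1 + (g.2 : ℝ) * v.2)) •
        Measure.dirac ((g.1 : ℝ) * u.1 + (g.2 : ℝ) * u.2))) :
    Tendsto (fun T : ℝ => (ω (Set.Icc (-T) T)).toReal / (2 * T)) atTop
      (nhds (∫ t in a..b, h t)) :=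
  weightedCPS_density_general α hα a b hab h hcont hnonneg hsupp u v hu hv ω hω
end

section
/- Let τ = (1+√5)/2 and let Λ = {m + nτ : m, n ∈ ℤ, −1/τ ≤ m − n/τ < 1} be the Fibonacci cut-and-project set. Then Λ is bounded distance equivalent to some lattice in ℝ: there exist a > 0 and a bijection φ : Λ → aℤ such that |x − φ(x)| is uniformly bounded over x ∈ Λ. -/
/-!
Write `x = m + nτ ∈ Λ` with internal coordinate `y = m - n/τ` and label `k = m + n`. Since
`1/τ = τ - 1`, one has `y = k - nτ` and `x = (3 - τ) k - (2 - τ) y`. The window `[-1/τ, 1)` has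
length `τ`, so every `k ∈ ℤ` is the label of exactly one point of `Λ`, and as `|y| ≤ 1` that point
lies within `2 - τ < (3 - τ)/2` of `(3 - τ) k`. Rounding to the lattice `(3 - τ)ℤ` is therefore a
bijection moving no point by more than `2 - τ`.
-/

open Set Real

section RoundToLattice

variable {α : Type*} [Field α] [LinearOrder α] [IsStrictOrderedRing α] [FloorRing α]

theorem round_div_eq_of_abs_sub_mul_lt {x a : α} {k : ℤ} (ha : 0 < a)
    (h : |x - a * k| < a / 2) : round (x / a) = k := by
  have hk : |x / a - k| < 1 / 2 := by
    rwa [← mul_div_cancel_left₀ (k : α) ha.ne', ← sub_div, abs_div, abs_of_pos ha,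
      div_lt_iff₀ ha, one_div_mul_eq_div]
  rw [round_eq_iff, mem_Ico]
  constructor <;> linarith [abs_lt.1 hk]

theorem exists_bijOn_of_abs_sub_mul_le {a C : α} (ha : 0 < a) (hC : C < a / 2) {p : ℤ → α}
    (hp : ∀ k, |p k - a * k| ≤ C) :
    ∃ φ : α → α, BijOn φ (range p) {y | ∃ k : ℤ, y = a * k} ∧ ∀ x ∈ range p, |x - φ x| ≤ C := by
  have hround (k : ℤ) : round (p k / a) = k :=
    round_div_eq_of_abs_sub_mul_lt ha ((hp k).trans_lt hC)
  refine ⟨fun x ↦ a * round (x / a), ⟨?_, ?_, ?_⟩, ?_⟩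
  · rintro _ ⟨k, rfl⟩
    exact ⟨k, by simp only [hround]⟩
  · rintro _ ⟨k, rfl⟩ _ ⟨l, rfl⟩ h
    simp only [hround, mul_right_inj' ha.ne', Int.cast_inj] at h
    rw [h]
  · rintro _ ⟨k, rfl⟩
    exact ⟨p k, mem_range_self k, by simp only [hround]⟩
  · rintro _ ⟨k, rfl⟩
    simpa only [hround] using hp k

end RoundToLattice

section Fibonacci

local notation "τ" => goldenRatio

theorem inv_goldenRatio_eq_sub_one : τ⁻¹ = τ - 1 := by
  rw [inv_goldenRatio, ← one_sub_goldenConj]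
  ring

theorem neg_inv_goldenRatio_add_self : -τ⁻¹ + τ = 1 := by
  rw [inv_goldenRatio_eq_sub_one]
  ring

theorem sub_div_goldenRatio (x y : ℝ) : x - y / τ = x + y - y * τ := by
  rw [div_eq_mul_inv, inv_goldenRatio_eq_sub_one]
  ring

/-- The `n` of the unique point `m + nτ` of the Fibonacci set with `m + n = k`. -/
noncomputable def fibonacciIndex (k : ℤ) : ℤ :=
  toIcoDiv goldenRatio_pos (-τ⁻¹) (k : ℝ)

noncomputable def fibonacciPoint (k : ℤ) : ℝ :=
  ((k - fibonacciIndex k : ℤ) : ℝ) + fibonacciIndex k * τ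

theorem mem_window_iff_fibonacciIndex_eq (m n : ℤ) :
    (-1 / τ ≤ m - n / τ ∧ m - n / τ < 1) ↔ fibonacciIndex (m + n) = n := by
  rw [fibonacciIndex, toIcoDiv_eq_iff, zsmul_eq_mul, neg_inv_goldenRatio_add_self, neg_div, one_div,
    sub_div_goldenRatio, mem_Ico]
  push_cast
  rfl

theorem fibonacciSet_eq_range :
    {x : ℝ | ∃ m n : ℤ, x = m + n * τ ∧ -1 / τ ≤ m - n / τ ∧ m - n / τ < 1} =
      range fibonacciPoint := by
  ext x
  constructor
  · rintro ⟨m, n, rfl, hw⟩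
    refine ⟨m + n, ?_⟩
    rw [fibonacciPoint, (mem_window_iff_fibonacciIndex_eq m n).1 hw, add_sub_cancel_right]
  · rintro ⟨k, rfl⟩
    refine ⟨k - fibonacciIndex k, fibonacciIndex k, rfl, ?_⟩
    rw [mem_window_iff_fibonacciIndex_eq, sub_add_cancel]

theorem abs_fibonacciPoint_sub_le (k : ℤ) : |fibonacciPoint k - (3 - τ) * k| ≤ 2 - τ := by
  set n := fibonacciIndex k
  obtain ⟨hy₁, hy₂⟩ := (mem_window_iff_fibonacciIndex_eq (k - n) n).2 (by rw [sub_add_cancel])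
  rw [sub_div_goldenRatio, neg_div] at hy₁
  rw [sub_div_goldenRatio] at hy₂
  push_cast at hy₁ hy₂
  have hy : |(k : ℝ) - n * τ| ≤ 1 := by
    have : 1 / τ < 1 := by rw [one_div]; exact inv_lt_one_of_one_lt₀ one_lt_goldenRatio
    rw [abs_le]
    constructor <;> linarith
  have hx : fibonacciPoint k - (3 - τ) * k = -(2 - τ) * (k - n * τ) := by
    rw [fibonacciPoint]
    push_cast
    linear_combination (n : ℝ) * goldenRatio_sq
  have hτ : 0 < 2 - τ := by linarith [goldenRatio_lt_two]
  rw [hx, abs_mul, abs_neg, abs_of_pos hτ]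
  exact mul_le_of_le_one_right hτ.le hy

end Fibonacci

/-- The Fibonacci cut-and-project set
`Λ = {m + nτ : m, n ∈ ℤ, −1/τ ≤ m − n/τ < 1}`, `τ = (1+√5)/2`, is bounded distance
equivalent to some lattice `aℤ` in `ℝ`. -/
theorem fibonacci_bddDist_lattice (τ : ℝ) (hτ : τ = (1 + Real.sqrt 5) / 2)
    (Λ : Set ℝ)
    (hΛ : Λ = {x : ℝ | ∃ m n : ℤ, x = (m : ℝ) + (n : ℝ) * τ ∧
      -1 / τ ≤ (m : ℝ) - (n : ℝ) / τ ∧ (m : ℝ) - (n : ℝ) / τ < 1}) :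
    ∃ a : ℝ, 0 < a ∧ ∃ φ : ℝ → ℝ,
      Set.BijOn φ Λ {y : ℝ | ∃ k : ℤ, y = a * (k : ℝ)} ∧
      ∃ C : ℝ, ∀ x ∈ Λ, |x - φ x| ≤ C := by
  obtain rfl : τ = goldenRatio := hτ
  rw [hΛ, fibonacciSet_eq_range]
  have ha : 0 < 3 - goldenRatio := by linarith [goldenRatio_lt_two]
  have hC : 2 - goldenRatio < (3 - goldenRatio) / 2 := by linarith [one_lt_goldenRatio]
  obtain ⟨φ, hφ, hφC⟩ := exists_bijOn_of_abs_sub_mul_le ha hC abs_fibonacciPoint_sub_le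
  exact ⟨_, ha, φ, hφ, _, hφC⟩
end
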